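/- arXiv:2504.02490 — 5 statements merged into one kernel-verified Lean document; each statement's English description precedes it below -/
import Mathlib

section
/- There exist nonzero vectors ξ, η ∈ ℂ² such that (η_i ξ_j + η_j ξ_i)/2 = δ_{ij} · (η_1ξ_1 + η_2ξ_2)/2 for all i, j ∈ {1,2}, where δ_{ij} is the Kronecker delta. Consequently the complexified symbol of the deviatoric symmetric gradient ℰ_d (namely η ⊙ ξ − ((η·ξ)/2)·Id, where η·ξ = Σ_k η_kξ_k is the bilinear dot product without conjugation) vanishes at a nonzero pair (ξ, η); that is, ℰ_d is not ℂ-elliptic in dimension n = 2. -/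
/-! With `i * i = -1`, the vectors `ξ = (1, i)` and `η = (1, -i)` satisfy `η ⊙ ξ = Id`: the diagonal
entries are `1` and `-i * i = 1`, the off-diagonal ones `(i - i) / 2 = 0`. As `η · ξ = 2`, this is
`((η · ξ) / 2) • Id`, so the deviatoric symbol vanishes at the nonzero pair `(ξ, η)`. -/

open Matrix

variable {K : Type*} [Field K] {n : ℕ}

def symmTensor (η ξ : Fin n → K) : Matrix (Fin n) (Fin n) K :=
  Matrix.of fun i j => (η i * ξ j + η j * ξ i) / 2

def deviatoricSymbol (ξ η : Fin n → K) : Matrix (Fin n) (Fin n) K :=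
  symmTensor η ξ - ((η ⬝ᵥ ξ) / n) • (1 : Matrix (Fin n) (Fin n) K)

theorem deviatoricSymbol_eq_zero_iff {ξ η : Fin n → K} :
    deviatoricSymbol ξ η = 0 ↔
      ∀ i j, (η i * ξ j + η j * ξ i) / 2 = (if i = j then 1 else 0) * ((η ⬝ᵥ ξ) / n) := by
  simp only [deviatoricSymbol, sub_eq_zero, ← Matrix.ext_iff, symmTensor, of_apply,
    Matrix.smul_apply, one_apply, smul_eq_mul, mul_comm ((η ⬝ᵥ ξ) / n)]

theorem symmTensor_of_mul_self_eq_neg_one {i : K} (hi : i * i = -1) :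
    symmTensor ![1, -i] ![1, i] = ((![1, -i] ⬝ᵥ ![1, i]) / 2) • (1 : Matrix (Fin 2) (Fin 2) K) := by
  ext a b
  fin_cases a <;> fin_cases b <;>
    simp [symmTensor, dotProduct, Fin.sum_univ_two, hi, one_apply, one_add_one_eq_two]

theorem deviatoricSymbol_eq_zero_of_mul_self_eq_neg_one {i : K} (hi : i * i = -1) :
    deviatoricSymbol ![1, i] ![1, -i] = 0 := by
  simp [deviatoricSymbol, symmTensor_of_mul_self_eq_neg_one hi]

/-- The deviatoric symmetric gradient is not ℂ-elliptic in dimension `n = 2`: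
there are nonzero `ξ, η ∈ ℂ²` with `η ⊙ ξ = ((η·ξ)/2) · Id`, i.e.
`(η i * ξ j + η j * ξ i)/2 = δ_{ij} * (η 0 * ξ 0 + η 1 * ξ 1)/2` for all `i, j`. -/
theorem deviatoric_not_CElliptic_dim_two :
    ∃ ξ η : Fin 2 → ℂ, ξ ≠ 0 ∧ η ≠ 0 ∧
      ∀ i j : Fin 2,
        (η i * ξ j + η j * ξ i) / 2 =
          (if i = j then (1 : ℂ) else 0) * ((η 0 * ξ 0 + η 1 * ξ 1) / 2) := by
  refine ⟨![1, Complex.I], ![1, -Complex.I], fun h => one_ne_zero (congrFun h 0),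
    fun h => one_ne_zero (congrFun h 0), fun i j => ?_⟩
  simpa [dotProduct, Fin.sum_univ_two] using deviatoricSymbol_eq_zero_iff.mp
    (deviatoricSymbol_eq_zero_of_mul_self_eq_neg_one Complex.I_mul_I) i j
end

section
/- (Uniqueness of the approximate jump triplet.) Let n, m ≥ 1, let u : ℝ^n → ℝ^m be locally integrable, and let x ∈ ℝ^n. Suppose (a, b, ν) and (a', b', ν') are both approximate jump triplets of u at x, i.e. ν, ν' are unit vectors and the averages ⨍_{B_r^+(x,ν)} ‖u(y) − a‖ dy and ⨍_{B_r^−(x,ν)} ‖u(y) − b‖ dy tend to 0 as r ↓ 0, and likewise with (a', b', ν'), where B_r^±(x,ν) := {y ∈ B_r(x) : ±⟨ν, y − x⟩ > 0}. If a ≠ b, then either (a', b', ν') = (a, b, ν) or (a', b', ν') = (b, a, −ν). -/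
open MeasureTheory
open scoped RealInnerProductSpace

open Metric Filter Set
open scoped Pointwise


section Key

variable {n m : ℕ}

/-- Volume of a "wedge" inside a ball scales like `r ^ n`. -/
lemma wedge_volume (w w' x : EuclideanSpace ℝ (Fin n)) {r : ℝ} (hr : 0 < r) :
    volume {y : EuclideanSpace ℝ (Fin n) |
        y ∈ ball x r ∧ 0 < ⟪w, y - x⟫ ∧ 0 < ⟪w', y - x⟫}
      = ENNReal.ofReal (r ^ n) *
        volume {y : EuclideanSpace ℝ (Fin n) | y ∈ ball 0 1 ∧ 0 < ⟪w, y⟫ ∧ 0 < ⟪w', y⟫} := by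
  set K : Set (EuclideanSpace ℝ (Fin n)) := {y | 0 < ⟪w, y⟫ ∧ 0 < ⟪w', y⟫} with hK
  have h1 : {y : EuclideanSpace ℝ (Fin n) |
      y ∈ ball x r ∧ 0 < ⟪w, y - x⟫ ∧ 0 < ⟪w', y - x⟫}
      = (fun y => y + (-x)) ⁻¹' (ball 0 r ∩ K) := by
    ext y
    simp [hK, mem_ball, dist_eq_norm, mem_ball_zero_iff, sub_eq_add_neg]
  have h2 : ball (0 : EuclideanSpace ℝ (Fin n)) r ∩ K = r • (ball 0 1 ∩ K) := by
    rw [smul_set_inter₀ hr.ne', smul_unitBall_of_pos hr]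
    congr 1
    ext y
    rw [mem_smul_set_iff_inv_smul_mem₀ hr.ne']
    simp only [hK, mem_setOf_eq, real_inner_smul_right]
    have hri : (0:ℝ) < r⁻¹ := inv_pos.2 hr
    constructor <;> rintro ⟨h1, h2⟩ <;> constructor <;> nlinarith

  have h3 : {y : EuclideanSpace ℝ (Fin n) | y ∈ ball 0 1 ∧ 0 < ⟪w, y⟫ ∧ 0 < ⟪w', y⟫}
      = ball 0 1 ∩ K := by ext y; simp [hK]
  rw [h1, measure_preimage_add_right, h2, Measure.addHaar_smul_of_nonneg volume hr.le, h3,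
    finrank_euclideanSpace_fin]

end Key

section Key2

lemma key {n m : ℕ}
    (u : EuclideanSpace ℝ (Fin n) → EuclideanSpace ℝ (Fin m))
    (hu : LocallyIntegrable u volume)
    (x : EuclideanSpace ℝ (Fin n))
    (c c' : EuclideanSpace ℝ (Fin m)) (w w' z : EuclideanSpace ℝ (Fin n))
    (hzw : 0 < ⟪w, z⟫) (hzw' : 0 < ⟪w', z⟫)
    (hc : Tendsto (fun r : ℝ => ⨍ y in {y ∈ ball x r | 0 < ⟪w, y - x⟫}, ‖u y - c‖)
      (nhdsWithin 0 (Set.Ioi 0)) (nhds 0))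
    (hc' : Tendsto (fun r : ℝ => ⨍ y in {y ∈ ball x r | 0 < ⟪w', y - x⟫}, ‖u y - c'‖)
      (nhdsWithin 0 (Set.Ioi 0)) (nhds 0)) :
    c = c' := by
  classical
  -- the space is nontrivial since `z ≠ 0`
  have hz0 : z ≠ 0 := by
    intro h; rw [h, inner_zero_right] at hzw; exact lt_irrefl _ hzw
  haveI : Nontrivial (EuclideanSpace ℝ (Fin n)) := nontrivial_of_ne z 0 hz0
  set K1 : Set (EuclideanSpace ℝ (Fin n)) :=
    {y | y ∈ ball 0 1 ∧ 0 < ⟪w, y⟫ ∧ 0 < ⟪w', y⟫} with hK1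
  have hcont : ∀ v : EuclideanSpace ℝ (Fin n),
      Continuous fun y : EuclideanSpace ℝ (Fin n) => ⟪v, y⟫ := fun v =>
    Continuous.inner continuous_const continuous_id
  have hK1open : IsOpen K1 := by
    have heq : K1 = ball 0 1 ∩ ({y | 0 < ⟪w, y⟫} ∩ {y | 0 < ⟪w', y⟫}) := by
      ext y; simp [hK1, and_assoc]
    rw [heq]
    exact isOpen_ball.inter ((isOpen_lt continuous_const (hcont w)).inter
      (isOpen_lt continuous_const (hcont w')))
  have hK1ne : K1.Nonempty := by
    refine ⟨(1 + ‖z‖)⁻¹ • z, ?_, ?_, ?_⟩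
    · rw [mem_ball_zero_iff, norm_smul]
      have h1 : (0:ℝ) < 1 + ‖z‖ := by positivity
      rw [Real.norm_eq_abs, abs_of_pos (inv_pos.2 h1)]
      rw [inv_mul_lt_iff₀ h1]
      nlinarith [norm_nonneg z]
    · rw [real_inner_smul_right]
      have h1 : (0:ℝ) < 1 + ‖z‖ := by positivity
      exact mul_pos (inv_pos.2 h1) hzw
    · rw [real_inner_smul_right]
      have h1 : (0:ℝ) < 1 + ‖z‖ := by positivity
      exact mul_pos (inv_pos.2 h1) hzw'
  set κ : ENNReal := volume K1 with hκdef
  have hκpos : 0 < κ := hK1open.measure_pos volume hK1ne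
  have hκfin : κ < ⊤ :=
    lt_of_le_of_lt (measure_mono (fun y hy => hy.1)) measure_ball_lt_top
  set B : ENNReal := volume (ball (0 : EuclideanSpace ℝ (Fin n)) 1) with hBdef
  have hBfin : B < ⊤ := measure_ball_lt_top
  set C : ℝ := B.toReal / κ.toReal with hCdef
  set F : ℝ → ℝ := fun r => ⨍ y in {y ∈ ball x r | 0 < ⟪w, y - x⟫}, ‖u y - c‖ with hF
  set F' : ℝ → ℝ := fun r => ⨍ y in {y ∈ ball x r | 0 < ⟪w', y - x⟫}, ‖u y - c'‖ with hF'
  have hκt : (0:ℝ) < κ.toReal := ENNReal.toReal_pos hκpos.ne' hκfin.ne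
  -- main estimate
  have main : ∀ r : ℝ, 0 < r → ‖c - c'‖ ≤ C * (F r + F' r) := by
    intro r hr
    set W : Set (EuclideanSpace ℝ (Fin n)) :=
      {y | y ∈ ball x r ∧ 0 < ⟪w, y - x⟫ ∧ 0 < ⟪w', y - x⟫} with hW
    set H : Set (EuclideanSpace ℝ (Fin n)) := {y ∈ ball x r | 0 < ⟪w, y - x⟫} with hH
    set H' : Set (EuclideanSpace ℝ (Fin n)) := {y ∈ ball x r | 0 < ⟪w', y - x⟫} with hH'
    have hWH : W ⊆ H := fun y hy => ⟨hy.1, hy.2.1⟩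
    have hWH' : W ⊆ H' := fun y hy => ⟨hy.1, hy.2.2⟩
    have hμW : volume W = ENNReal.ofReal (r ^ n) * κ := wedge_volume w w' x hr
    have hμWpos : 0 < volume W := by
      rw [hμW]
      exact ENNReal.mul_pos (ENNReal.ofReal_pos.2 (by positivity)).ne' hκpos.ne'
    have hμWfin : volume W < ⊤ :=
      lt_of_le_of_lt (measure_mono (fun y hy => hy.1)) measure_ball_lt_top
    have hμHfin : volume H < ⊤ :=
      lt_of_le_of_lt (measure_mono (fun y hy => hy.1)) measure_ball_lt_top
    have hμH'fin : volume H' < ⊤ :=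
      lt_of_le_of_lt (measure_mono (fun y hy => hy.1)) measure_ball_lt_top
    have hμHpos : 0 < volume H := lt_of_lt_of_le hμWpos (measure_mono hWH)
    have hμH'pos : 0 < volume H' := lt_of_lt_of_le hμWpos (measure_mono hWH')
    -- measurability
    have hmw : MeasurableSet {y : EuclideanSpace ℝ (Fin n) | 0 < ⟪w, y - x⟫} :=
      (isOpen_lt continuous_const
        (Continuous.inner continuous_const (continuous_id.sub continuous_const))).measurableSet
    have hmw' : MeasurableSet {y : EuclideanSpace ℝ (Fin n) | 0 < ⟪w', y - x⟫} :=
      (isOpen_lt continuous_const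
        (Continuous.inner continuous_const (continuous_id.sub continuous_const))).measurableSet
    have hWmeas : MeasurableSet W := by
      have : W = ball x r ∩ ({y | 0 < ⟪w, y - x⟫} ∩ {y | 0 < ⟪w', y - x⟫}) := by
        ext y; simp [hW, and_assoc]
      rw [this]; exact measurableSet_ball.inter (hmw.inter hmw')
    -- integrability
    have hic : IntegrableOn (fun y => ‖u y - c‖) (closedBall x r) volume := by
      exact ((hu.integrableOn_isCompact (isCompact_closedBall x r)).sub
        (integrableOn_const measure_closedBall_lt_top.ne)).norm
    have hic' : IntegrableOn (fun y => ‖u y - c'‖) (closedBall x r) volume := by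
      exact ((hu.integrableOn_isCompact (isCompact_closedBall x r)).sub
        (integrableOn_const measure_closedBall_lt_top.ne)).norm
    have hHsub : H ⊆ closedBall x r := fun y hy => ball_subset_closedBall hy.1
    have hH'sub : H' ⊆ closedBall x r := fun y hy => ball_subset_closedBall hy.1
    have hicH : IntegrableOn (fun y => ‖u y - c‖) H volume := hic.mono_set hHsub
    have hicH' : IntegrableOn (fun y => ‖u y - c'‖) H' volume := hic'.mono_set hH'sub
    have hicW : IntegrableOn (fun y => ‖u y - c‖) W volume := hicH.mono_set hWH
    have hicW' : IntegrableOn (fun y => ‖u y - c'‖) W volume := hicH'.mono_set hWH'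
    -- nonnegativity of averages
    have hF0 : 0 ≤ F r := by
      simp only [hF]
      rw [setAverage_eq]
      exact smul_nonneg (by positivity) (integral_nonneg fun y => norm_nonneg _)
    have hF'0 : 0 ≤ F' r := by
      simp only [hF']
      rw [setAverage_eq]
      exact smul_nonneg (by positivity) (integral_nonneg fun y => norm_nonneg _)
    -- integral over W bounded by integral over H
    have hIW : ∫ y in W, ‖u y - c‖ ≤ ∫ y in H, ‖u y - c‖ :=
      setIntegral_mono_set hicH (ae_of_all _ fun y => norm_nonneg _)
        (HasSubset.Subset.eventuallyLE hWH)
    have hIW' : ∫ y in W, ‖u y - c'‖ ≤ ∫ y in H', ‖u y - c'‖ :=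
      setIntegral_mono_set hicH' (ae_of_all _ fun y => norm_nonneg _)
        (HasSubset.Subset.eventuallyLE hWH')
    -- integral over H in terms of average
    have hIH : ∫ y in H, ‖u y - c‖ = (volume H).toReal * F r := by
      simp only [hF]
      rw [setAverage_eq, measureReal_def, smul_eq_mul, ← mul_assoc,
        mul_inv_cancel₀ (ENNReal.toReal_pos hμHpos.ne' hμHfin.ne).ne', one_mul]
    have hIH' : ∫ y in H', ‖u y - c'‖ = (volume H').toReal * F' r := by
      simp only [hF']
      rw [setAverage_eq, measureReal_def, smul_eq_mul, ← mul_assoc,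
        mul_inv_cancel₀ (ENNReal.toReal_pos hμH'pos.ne' hμH'fin.ne).ne', one_mul]
    -- lower bound: constant times measure
    have hconst : ‖c - c'‖ * (volume W).toReal
        ≤ (∫ y in W, ‖u y - c‖) + ∫ y in W, ‖u y - c'‖ := by
      have h1 : ∫ y in W, ‖c - c'‖ ∂volume = (volume W).toReal * ‖c - c'‖ := by
        rw [setIntegral_const, smul_eq_mul, measureReal_def]
      have h2 : ∫ y in W, ‖c - c'‖ ∂volume
          ≤ ∫ y in W, (‖u y - c‖ + ‖u y - c'‖) ∂volume := by
        refine setIntegral_mono_on (integrableOn_const hμWfin.ne)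
          (hicW.add hicW') hWmeas (fun y _ => ?_)
        calc ‖c - c'‖ = ‖(u y - c') - (u y - c)‖ := by rw [sub_sub_sub_cancel_left]
        _ ≤ ‖u y - c'‖ + ‖u y - c‖ := norm_sub_le _ _
        _ = ‖u y - c‖ + ‖u y - c'‖ := add_comm _ _
      rw [mul_comm, ← h1]
      rw [integral_add hicW hicW'] at h2
      exact h2
    -- measure bounds
    have hvW : (volume W).toReal = r ^ n * κ.toReal := by
      rw [hμW, ENNReal.toReal_mul, ENNReal.toReal_ofReal (by positivity)]
    have hball : volume (ball x r) = ENNReal.ofReal (r ^ n) * B := by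
      rw [Measure.addHaar_ball volume x hr.le, finrank_euclideanSpace_fin]
    have hvH : (volume H).toReal ≤ r ^ n * B.toReal := by
      have hle : volume H ≤ ENNReal.ofReal (r ^ n) * B := by
        rw [← hball]; exact measure_mono (fun y hy => hy.1)
      have h4 := ENNReal.toReal_mono (ENNReal.mul_ne_top ENNReal.ofReal_ne_top hBfin.ne) hle
      rwa [ENNReal.toReal_mul, ENNReal.toReal_ofReal (by positivity : (0:ℝ) ≤ r ^ n)] at h4
    have hvH' : (volume H').toReal ≤ r ^ n * B.toReal := by
      have hle : volume H' ≤ ENNReal.ofReal (r ^ n) * B := by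
        rw [← hball]; exact measure_mono (fun y hy => hy.1)
      have h4 := ENNReal.toReal_mono (ENNReal.mul_ne_top ENNReal.ofReal_ne_top hBfin.ne) hle
      rwa [ENNReal.toReal_mul, ENNReal.toReal_ofReal (by positivity : (0:ℝ) ≤ r ^ n)] at h4
    -- combine
    have hchain : ‖c - c'‖ * (volume W).toReal ≤ r ^ n * B.toReal * (F r + F' r) := by
      calc ‖c - c'‖ * (volume W).toReal
          ≤ (∫ y in W, ‖u y - c‖) + ∫ y in W, ‖u y - c'‖ := hconst
      _ ≤ (volume H).toReal * F r + (volume H').toReal * F' r := by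
          rw [← hIH, ← hIH']; exact add_le_add hIW hIW'
      _ ≤ (r ^ n * B.toReal) * F r + (r ^ n * B.toReal) * F' r := by
          gcongr
      _ = r ^ n * B.toReal * (F r + F' r) := by ring
    rw [hvW] at hchain
    have hpos : (0:ℝ) < r ^ n * κ.toReal := by positivity
    have heq2 : (C * (F r + F' r)) * (r ^ n * κ.toReal) = r ^ n * B.toReal * (F r + F' r) := by
      rw [hCdef]; field_simp
    exact le_of_mul_le_mul_right (by rw [heq2]; exact hchain) hpos
  have hlim : Tendsto (fun r => C * (F r + F' r)) (nhdsWithin (0:ℝ) (Set.Ioi 0)) (nhds 0) := by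
    have h5 := (hc.add hc').const_mul C
    simpa using h5
  have hev : ∀ᶠ r in nhdsWithin (0:ℝ) (Set.Ioi 0), ‖c - c'‖ ≤ C * (F r + F' r) :=
    eventually_mem_nhdsWithin.mono (fun r hr => main r hr)
  have h6 : ‖c - c'‖ ≤ 0 := ge_of_tendsto hlim hev
  exact sub_eq_zero.1 (norm_le_zero_iff.1 h6)

end Key2


/-- **Uniqueness of the approximate jump triplet.** If `(a, b, ν)` and
`(a', b', ν')` are both approximate jump triplets of a locally integrable `u` at `x`
(averages over the `ν`-oriented half-balls of `‖u - a‖`, resp. `‖u - b‖`, vanish as `r ↓ 0`)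
and `a ≠ b`, then `(a', b', ν') = (a, b, ν)` or `(a', b', ν') = (b, a, -ν)`. -/
theorem jump_triplet_unique (n m : ℕ) (hn : 1 ≤ n) (hm : 1 ≤ m)
    (u : EuclideanSpace ℝ (Fin n) → EuclideanSpace ℝ (Fin m))
    (hu : LocallyIntegrable u volume)
    (x : EuclideanSpace ℝ (Fin n))
    (a b a' b' : EuclideanSpace ℝ (Fin m)) (ν ν' : EuclideanSpace ℝ (Fin n))
    (hν : ‖ν‖ = 1) (hν' : ‖ν'‖ = 1)
    (ha : Filter.Tendsto
      (fun r : ℝ => ⨍ y in {y ∈ Metric.ball x r | 0 < ⟪ν, y - x⟫}, ‖u y - a‖)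
      (nhdsWithin 0 (Set.Ioi 0)) (nhds 0))
    (hb : Filter.Tendsto
      (fun r : ℝ => ⨍ y in {y ∈ Metric.ball x r | ⟪ν, y - x⟫ < 0}, ‖u y - b‖)
      (nhdsWithin 0 (Set.Ioi 0)) (nhds 0))
    (ha' : Filter.Tendsto
      (fun r : ℝ => ⨍ y in {y ∈ Metric.ball x r | 0 < ⟪ν', y - x⟫}, ‖u y - a'‖)
      (nhdsWithin 0 (Set.Ioi 0)) (nhds 0))
    (hb' : Filter.Tendsto
      (fun r : ℝ => ⨍ y in {y ∈ Metric.ball x r | ⟪ν', y - x⟫ < 0}, ‖u y - b'‖)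
      (nhdsWithin 0 (Set.Ioi 0)) (nhds 0))
    (hab : a ≠ b) :
    (a' = a ∧ b' = b ∧ ν' = ν) ∨ (a' = b ∧ b' = a ∧ ν' = -ν) := by
  have hνν : ⟪ν, ν⟫ = 1 := by
    rw [real_inner_self_eq_norm_sq, hν]; norm_num
  have hν'ν' : ⟪ν', ν'⟫ = 1 := by
    rw [real_inner_self_eq_norm_sq, hν']; norm_num
  have hνpos : (0:ℝ) < ⟪ν, ν⟫ := by rw [hνν]; norm_num
  have hν'pos : (0:ℝ) < ⟪ν', ν'⟫ := by rw [hν'ν']; norm_num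
  have hsetb : ∀ r : ℝ, {y ∈ Metric.ball x r | 0 < ⟪-ν, y - x⟫}
      = {y ∈ Metric.ball x r | ⟪ν, y - x⟫ < 0} := by
    intro r; ext y; simp [inner_neg_left, neg_pos]
  have hsetb' : ∀ r : ℝ, {y ∈ Metric.ball x r | 0 < ⟪-ν', y - x⟫}
      = {y ∈ Metric.ball x r | ⟪ν', y - x⟫ < 0} := by
    intro r; ext y; simp [inner_neg_left, neg_pos]
  have hb₂ : Filter.Tendsto
      (fun r : ℝ => ⨍ y in {y ∈ Metric.ball x r | 0 < ⟪-ν, y - x⟫}, ‖u y - b‖)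
      (nhdsWithin 0 (Set.Ioi 0)) (nhds 0) := by simpa only [hsetb] using hb
  have hb'₂ : Filter.Tendsto
      (fun r : ℝ => ⨍ y in {y ∈ Metric.ball x r | 0 < ⟪-ν', y - x⟫}, ‖u y - b'‖)
      (nhdsWithin 0 (Set.Ioi 0)) (nhds 0) := by simpa only [hsetb'] using hb'
  have hnegpos : (0:ℝ) < ⟪-ν, -ν⟫ := by rw [inner_neg_neg]; exact hνpos
  by_cases h1 : ν' = ν
  · subst h1
    refine Or.inl ⟨?_, ?_, rfl⟩
    · exact key u hu x a' a ν' ν' ν' hν'pos hν'pos ha' ha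
    · exact key u hu x b' b (-ν') (-ν') (-ν')
        (by rw [inner_neg_neg]; exact hν'pos) (by rw [inner_neg_neg]; exact hν'pos) hb'₂ hb₂
  · by_cases h2 : ν' = -ν
    · subst h2
      refine Or.inr ⟨?_, ?_, rfl⟩
      · exact key u hu x a' b (-ν) (-ν) (-ν) hnegpos hnegpos ha' hb₂
      · have hb'₃ : Filter.Tendsto
            (fun r : ℝ => ⨍ y in {y ∈ Metric.ball x r | 0 < ⟪ν, y - x⟫}, ‖u y - b'‖)
            (nhdsWithin 0 (Set.Ioi 0)) (nhds 0) := by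
          simpa only [neg_neg] using hb'₂
        exact key u hu x b' a ν ν ν hνpos hνpos hb'₃ ha
    · exfalso
      have hlt1 : ⟪ν, ν'⟫ < 1 :=
        (inner_lt_one_iff_real_of_norm_eq_one hν hν').2 (fun h => h1 h.symm)
      have hgt1 : -1 < ⟪ν, ν'⟫ := by
        have hne : ν ≠ -ν' := by
          intro h
          apply h2
          rw [h, neg_neg]
        have h3 : ⟪ν, -ν'⟫ < 1 :=
          (inner_lt_one_iff_real_of_norm_eq_one hν (by simpa using hν')).2 hne
        rw [inner_neg_right] at h3
        linarith
      have e1 : a = a' := by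
        refine key u hu x a a' ν ν' (ν + ν') ?_ ?_ ha ha'
        · rw [inner_add_right, hνν]; linarith
        · rw [inner_add_right]
          have hcomm := real_inner_comm ν ν'
          linarith [hν'ν']
      have e2 : b = a' := by
        refine key u hu x b a' (-ν) ν' (ν' - ν) ?_ ?_ hb₂ ha'
        · rw [inner_neg_left, inner_sub_right, hνν]; linarith
        · rw [inner_sub_right]
          have hcomm := real_inner_comm ν ν'
          linarith [hν'ν']
      exact hab (e1.trans e2.symm)
end

section
/- (Kernel of the symmetric gradient.) Let n ≥ 1 and let u : ℝ^n → ℝ^n be continuously differentiable. Then the symmetric part of the derivative of u vanishes identically, i.e. ⟨Du(x)y, z⟩ + ⟨Du(x)z, y⟩ = 0 for all x, y, z ∈ ℝ^n, if and only if there exist a skew-symmetric linear map L : ℝ^n → ℝ^n (meaning ⟨Ly, z⟩ = −⟨y, Lz⟩ for all y, z) and a vector b ∈ ℝ^n such that u(x) = Lx + b for all x ∈ ℝ^n. -/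
open scoped RealInnerProductSpace

/-- **Kernel of the symmetric gradient.** A `C¹` map `u : ℝ^n → ℝ^n` has
identically vanishing symmetric gradient (`⟪Du(x)y, z⟫ + ⟪Du(x)z, y⟫ = 0` for all `x, y, z`)
if and only if `u(x) = Lx + b` for a skew-symmetric linear map `L` and a vector `b`. -/
theorem ker_symmetric_gradient (n : ℕ) (hn : 1 ≤ n)
    (u : EuclideanSpace ℝ (Fin n) → EuclideanSpace ℝ (Fin n))
    (hu : ContDiff ℝ 1 u) :
    (∀ x y z : EuclideanSpace ℝ (Fin n),
        ⟪fderiv ℝ u x y, z⟫ + ⟪fderiv ℝ u x z, y⟫ = 0) ↔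
      ∃ L : EuclideanSpace ℝ (Fin n) →ₗ[ℝ] EuclideanSpace ℝ (Fin n),
        (∀ y z : EuclideanSpace ℝ (Fin n), ⟪L y, z⟫ = -⟪y, L z⟫) ∧
        ∃ b : EuclideanSpace ℝ (Fin n), ∀ x, u x = L x + b := by
  constructor
  · intro h
    have hdiff : Differentiable ℝ u := hu.differentiable one_ne_zero
    -- Step 1: ⟪u a - u b, a - b⟫ = 0 for all a b
    have step1 : ∀ a b : EuclideanSpace ℝ (Fin n), ⟪u a - u b, a - b⟫ = 0 := by
      intro a b
      have hcurve : ∀ t : ℝ, HasDerivAt (fun t : ℝ => b + t • (a - b)) (a - b) t := by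
        intro t
        simpa using ((hasDerivAt_id t).smul_const (a - b)).const_add b
      have hg : ∀ t : ℝ, HasDerivAt (fun t : ℝ => ⟪u (b + t • (a - b)), a - b⟫)
          (⟪fderiv ℝ u (b + t • (a - b)) (a - b), a - b⟫) t := by
        intro t
        have hu' : HasDerivAt (fun t : ℝ => u (b + t • (a - b)))
            (fderiv ℝ u (b + t • (a - b)) (a - b)) t :=
          (hdiff (b + t • (a - b))).hasFDerivAt.comp_hasDerivAt t (hcurve t)
        simpa using hu'.inner (𝕜 := ℝ) (hasDerivAt_const t (a - b))
      have hzero : ∀ t : ℝ, ⟪fderiv ℝ u (b + t • (a - b)) (a - b), a - b⟫ = 0 := by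
        intro t
        have := h (b + t • (a - b)) (a - b) (a - b)
        linarith
      have hconst := is_const_of_deriv_eq_zero
        (f := fun t : ℝ => ⟪u (b + t • (a - b)), a - b⟫)
        (fun t => ((hg t).congr_deriv (hzero t)).differentiableAt)
        (fun t => by rw [(hg t).deriv, hzero]) 1 0
      simp only [one_smul, zero_smul, add_zero] at hconst
      have hba : b + (a - b) = a := by abel
      rw [hba] at hconst
      rw [inner_sub_left, hconst]
      ring
    -- Step 2: u a - u b = fderiv u a (a - b)
    have step2 : ∀ a b : EuclideanSpace ℝ (Fin n), u a - u b = fderiv ℝ u a (a - b) := by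
      intro a b
      have key : ∀ w : EuclideanSpace ℝ (Fin n),
          ⟪u a - u b, w⟫ + ⟪fderiv ℝ u a w, a - b⟫ = 0 := by
        intro w
        have hf : HasDerivAt (fun t : ℝ => u (a + t • w) - u b)
            (fderiv ℝ u a w) 0 := by
          have hcurve : HasDerivAt (fun t : ℝ => a + t • w) w 0 := by
            simpa using ((hasDerivAt_id (0:ℝ)).smul_const w).const_add a
          have h1 : HasDerivAt (fun t : ℝ => u (a + t • w)) (fderiv ℝ u (a + (0:ℝ) • w) w) 0 :=
            (hdiff _).hasFDerivAt.comp_hasDerivAt 0 hcurve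
          simp only [zero_smul, add_zero] at h1
          exact h1.sub_const (u b)
        have hgc : HasDerivAt (fun t : ℝ => a + t • w - b) w 0 := by
          have hcurve : HasDerivAt (fun t : ℝ => a + t • w) w 0 := by
            simpa using ((hasDerivAt_id (0:ℝ)).smul_const w).const_add a
          exact hcurve.sub_const b
        have hprod : HasDerivAt (fun t : ℝ => ⟪u (a + t • w) - u b, a + t • w - b⟫)
            (⟪u (a + (0:ℝ) • w) - u b, w⟫ + ⟪fderiv ℝ u a w, a + (0:ℝ) • w - b⟫) 0 :=
          hf.inner (𝕜 := ℝ) hgc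
        simp only [zero_smul, add_zero] at hprod
        have hzero : (fun t : ℝ => ⟪u (a + t • w) - u b, a + t • w - b⟫) = fun _ => (0:ℝ) := by
          funext t; exact step1 _ _
        rw [hzero] at hprod
        have := (hasDerivAt_const (0:ℝ) (0:ℝ)).unique hprod
        linarith [this]
      have key2 : ∀ w : EuclideanSpace ℝ (Fin n),
          ⟪u a - u b - fderiv ℝ u a (a - b), w⟫ = 0 := by
        intro w
        have h1 := key w
        have h2 := h a w (a - b)
        rw [inner_sub_left] at h1
        rw [inner_sub_left, inner_sub_left]
        have h3 : ⟪fderiv ℝ u a (a - b), w⟫ = -⟪fderiv ℝ u a w, a - b⟫ := by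
          have : ⟪fderiv ℝ u a (a - b), w⟫ = ⟪fderiv ℝ u a (a-b), w⟫ := rfl
          linarith [h2]
        linarith [h1, h3]
      have := key2 (u a - u b - fderiv ℝ u a (a - b))
      rwa [inner_self_eq_zero, sub_eq_zero] at this
    -- conclude
    refine ⟨(fderiv ℝ u 0).toLinearMap, ?_, u 0, ?_⟩
    · intro y z
      have := h 0 y z
      have h2 : ⟪y, fderiv ℝ u 0 z⟫ = ⟪fderiv ℝ u 0 z, y⟫ := real_inner_comm _ _
      simp only [ContinuousLinearMap.coe_coe]
      linarith
    · intro x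
      have := step2 0 x
      simp only [zero_sub, map_neg] at this
      simp only [ContinuousLinearMap.coe_coe]
      have : u x = u 0 + fderiv ℝ u 0 x := by
        have h1 := step2 0 x
        rw [zero_sub, map_neg] at h1
        linear_combination (norm := module) -h1
      rw [this]; abel
  · rintro ⟨L, hskew, b, hub⟩
    have hueq : u = fun x => (LinearMap.toContinuousLinearMap L) x + b := by
      funext x; simpa using hub x
    intro x y z
    have hfd : fderiv ℝ u x = LinearMap.toContinuousLinearMap L := by
      rw [hueq]
      exact (((LinearMap.toContinuousLinearMap L).hasFDerivAt (x := x)).add_const b).fderiv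
    rw [hfd]
    have h1 := hskew y z
    have h2 : ⟪y, L z⟫ = ⟪L z, y⟫ := real_inner_comm _ _
    simp only [LinearMap.coe_toContinuousLinearMap']
    linarith
end

section
/- (Rigidity for gradients pointwise parallel to a fixed rank-one matrix.) Let n, m ≥ 1, let u : ℝ^n → ℝ^m be continuously differentiable, and fix ξ ∈ ℝ^m and η ∈ ℝ^n. Suppose that for every x ∈ ℝ^n there exists t ∈ ℝ such that Du(x)y = t ⟨η, y⟩ ξ for all y ∈ ℝ^n (i.e. Du(x) is a scalar multiple of the rank-one matrix ξ ⊗ η at every point). Then there exist a function ψ : ℝ → ℝ and a constant vector c ∈ ℝ^m such that u(x) = ψ(⟨η, x⟩) ξ + c for all x ∈ ℝ^n. -/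
open scoped RealInnerProductSpace

/-- **Rigidity for gradients pointwise parallel to a fixed rank-one matrix.**
If `u : ℝ^n → ℝ^m` is `C¹` and at every point `Du(x)` is a scalar multiple of the rank-one
map `y ↦ ⟪η, y⟫ ξ`, then `u(x) = ψ(⟪η, x⟩) ξ + c` for some `ψ : ℝ → ℝ` and constant `c`. -/
theorem rigidity_rank_one_gradient (n m : ℕ) (hn : 1 ≤ n) (hm : 1 ≤ m)
    (u : EuclideanSpace ℝ (Fin n) → EuclideanSpace ℝ (Fin m))
    (hu : ContDiff ℝ 1 u)
    (ξ : EuclideanSpace ℝ (Fin m)) (η : EuclideanSpace ℝ (Fin n))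
    (h : ∀ x : EuclideanSpace ℝ (Fin n), ∃ t : ℝ,
      ∀ y : EuclideanSpace ℝ (Fin n), fderiv ℝ u x y = (t * ⟪η, y⟫) • ξ) :
    ∃ ψ : ℝ → ℝ, ∃ c : EuclideanSpace ℝ (Fin m),
      ∀ x : EuclideanSpace ℝ (Fin n), u x = ψ ⟪η, x⟫ • ξ + c := by
  classical
  have hud : Differentiable ℝ u := hu.differentiable one_ne_zero
  -- u is constant on level sets of ⟪η, ·⟫
  have hlevel : ∀ x y : EuclideanSpace ℝ (Fin n), ⟪η, x⟫ = ⟪η, y⟫ → u x = u y := by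
    intro x y hxy
    set v := y - x with hv
    have hvη : ⟪η, v⟫ = 0 := by
      rw [hv, inner_sub_right, hxy, sub_self]
    have hline : ∀ s : ℝ, HasFDerivAt (fun s : ℝ => x + s • v)
        ((1 : ℝ →L[ℝ] ℝ).smulRight v) s := by
      intro s
      exact ((hasFDerivAt_id s).smul_const v).const_add x
    have hg : ∀ s : ℝ, HasFDerivAt (fun s : ℝ => u (x + s • v))
        (0 : ℝ →L[ℝ] EuclideanSpace ℝ (Fin m)) s := by
      intro s
      have h1 : HasFDerivAt (fun s : ℝ => u (x + s • v))
          ((fderiv ℝ u (x + s • v)).comp ((1 : ℝ →L[ℝ] ℝ).smulRight v)) s :=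
        ((hud (x + s • v)).hasFDerivAt).comp s (hline s)
      convert h1 using 1
      ext w
      obtain ⟨t, ht⟩ := h (x + s • v)
      simp [ht, inner_smul_right, hvη]
    have hgc := is_const_of_fderiv_eq_zero (𝕜 := ℝ)
      (fun s => (hg s).differentiableAt) (fun s => (hg s).fderiv) 0 1
    simpa [hv] using hgc
  by_cases hξ : ξ = 0
  · -- then fderiv u = 0 everywhere, u is constant
    have hconst := is_const_of_fderiv_eq_zero (𝕜 := ℝ) hud (fun x => by
      ext y
      obtain ⟨t, ht⟩ := h x
      simp [ht, hξ]) 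
    refine ⟨fun _ => 0, u 0, fun x => ?_⟩
    simp [hξ, hconst x 0]
  · set K : ℝ := ⟪ξ, ξ⟫ with hKdef
    have hK : K ≠ 0 := by
      simpa [hKdef] using (inner_self_ne_zero (𝕜 := ℝ)).mpr hξ
    set r : EuclideanSpace ℝ (Fin n) → ℝ := fun x => K⁻¹ * ⟪ξ, u x⟫ with hrdef
    have hr : ∀ x, HasFDerivAt r (K⁻¹ • ((innerSL ℝ ξ).comp (fderiv ℝ u x))) x := by
      intro x
      have h1 := ((innerSL ℝ ξ).hasFDerivAt.comp x (hud x).hasFDerivAt).const_mul K⁻¹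
      simpa [hrdef] using h1
    have hD : ∀ x, HasFDerivAt (fun x => u x - r x • ξ)
        (0 : EuclideanSpace ℝ (Fin n) →L[ℝ] EuclideanSpace ℝ (Fin m)) x := by
      intro x
      have h1 := (hud x).hasFDerivAt.sub ((hr x).smul_const ξ)
      refine h1.congr_fderiv ?_
      refine ContinuousLinearMap.ext fun y => ?_
      obtain ⟨t, ht⟩ := h x
      have hthis : K⁻¹ * ⟪ξ, fderiv ℝ u x y⟫ = t * ⟪η, y⟫ := by
        rw [ht, real_inner_smul_right, ← hKdef]
        field_simp
      simp only [ContinuousLinearMap.zero_apply, ContinuousLinearMap.sub_apply,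
        ContinuousLinearMap.smulRight_apply, ContinuousLinearMap.smul_apply,
        ContinuousLinearMap.comp_apply, innerSL_apply_apply, smul_eq_mul]
      rw [hthis, ht, sub_self]
    have hDc := is_const_of_fderiv_eq_zero (𝕜 := ℝ)
      (fun x => (hD x).differentiableAt) (fun x => (hD x).fderiv)
    set c : EuclideanSpace ℝ (Fin m) := u 0 - r 0 • ξ with hcdef
    have key : ∀ x, u x = r x • ξ + c := by
      intro x
      have := hDc x 0
      rw [hcdef, ← this]
      abel
    refine ⟨fun s => if hη : η = 0 then r 0 else r ((s / ⟪η, η⟫) • η), c, fun x => ?_⟩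
    rw [key x]
    congr 2
    by_cases hη : η = 0
    · simp only [hη, dif_pos]
      have : u x = u 0 := hlevel x 0 (by simp [hη])
      simp [hrdef, this]
    · simp only [dif_neg hη]
      have hKη : ⟪η, η⟫ ≠ 0 := (inner_self_ne_zero (𝕜 := ℝ)).mpr hη
      have hinner : ⟪η, x⟫ = ⟪η, (⟪η, x⟫ / ⟪η, η⟫) • η⟫ := by
        rw [real_inner_smul_right]
        exact (div_mul_cancel₀ _ hKη).symm
      have := hlevel x ((⟪η, x⟫ / ⟪η, η⟫) • η) hinner
      simp [hrdef, this]
end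

section
/- (Finite-dimensionality of the kernel of a ℂ-elliptic operator.) Let n, m, N ≥ 1 and let A_1, …, A_n : ℝ^m → ℝ^N define a ℂ-elliptic operator 𝒜. Then the real vector space { v : ℝ^n → ℝ^m : v smooth and 𝒜v(x) = 0 for all x ∈ ℝ^n } is finite-dimensional. -/
open scoped ContDiff

namespace CEllAux

variable {n : ℕ} {F G : Type*} [NormedAddCommGroup F] [NormedSpace ℝ F]
  [NormedAddCommGroup G] [NormedSpace ℝ G]

local notation "E" => EuclideanSpace ℝ (Fin n)

noncomputable def pd (j : Fin n) (f : E → F) : E → F :=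
  fun x => fderiv ℝ f x (EuclideanSpace.single j 1)

theorem pd_contDiff {j : Fin n} {f : E → F} (hf : ContDiff ℝ (⊤ : ℕ∞) f) :
    ContDiff ℝ (⊤ : ℕ∞) (pd j f) := by
  have h : ContDiff ℝ (⊤ : ℕ∞) (fderiv ℝ f) := hf.fderiv_right (by simp)
  exact h.clm_apply contDiff_const

theorem pd_add {j : Fin n} {f g : E → F} (hf : Differentiable ℝ f) (hg : Differentiable ℝ g) :
    pd j (fun x => f x + g x) = fun x => pd j f x + pd j g x := by
  funext x
  simp [pd, fderiv_fun_add (hf x) (hg x)]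

theorem pd_smul {𝕜' : Type*} [NontriviallyNormedField 𝕜'] [NormedSpace 𝕜' F]
    [SMulCommClass ℝ 𝕜' F] {j : Fin n} {f : E → F} (c : 𝕜') (hf : Differentiable ℝ f) :
    pd j (fun x => c • f x) = fun x => c • pd j f x := by
  funext x
  simp [pd, fderiv_fun_const_smul (hf x) c]

theorem pd_zero {j : Fin n} : pd j (fun _ : E => (0 : F)) = fun _ => 0 := by
  funext x
  simp [pd, fderiv_const]

theorem pd_comm {a b : Fin n} {f : E → F} (hf : ContDiff ℝ (⊤ : ℕ∞) f) :
    pd a (pd b f) = pd b (pd a f) := by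
  have hdf : Differentiable ℝ f := hf.differentiable (by simp)
  have h1 : ContDiff ℝ (⊤ : ℕ∞) (fderiv ℝ f) := hf.fderiv_right (by simp)
  have key : ∀ c d : Fin n, pd c (pd d f) = fun x =>
      fderiv ℝ (fderiv ℝ f) x (EuclideanSpace.single c 1) (EuclideanSpace.single d 1) := by
    intro c d
    funext x
    have : pd d f = fun y => (fderiv ℝ f y) (EuclideanSpace.single d 1) := rfl
    rw [pd, this, fderiv_clm_apply (h1.differentiable (by simp) x) (differentiableAt_const _)]
    simp
  rw [key a b, key b a]
  funext x
  exact second_derivative_symmetric (fun y => (hdf y).hasFDerivAt)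
    ((h1.differentiable (by simp) x).hasFDerivAt) _ _

noncomputable def pdComp (L : List (Fin n)) (f : E → F) : E → F := L.foldr pd f

@[simp] theorem pdComp_nil {f : E → F} : pdComp ([] : List (Fin n)) f = f := rfl

@[simp] theorem pdComp_cons {a : Fin n} {L : List (Fin n)} {f : E → F} :
    pdComp (a :: L) f = pd a (pdComp L f) := rfl

theorem pdComp_append {L₁ L₂ : List (Fin n)} {f : E → F} :
    pdComp (L₁ ++ L₂) f = pdComp L₁ (pdComp L₂ f) := by
  simp [pdComp, List.foldr_append]

theorem pdComp_contDiff {L : List (Fin n)} {f : E → F} (hf : ContDiff ℝ (⊤ : ℕ∞) f) :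
    ContDiff ℝ (⊤ : ℕ∞) (pdComp L f) := by
  induction L with
  | nil => exact hf
  | cons a L ih => exact pd_contDiff ih

theorem pdComp_perm {L L' : List (Fin n)} (hp : L.Perm L') {f : E → F} (hf : ContDiff ℝ (⊤ : ℕ∞) f) :
    pdComp L f = pdComp L' f := by
  induction hp generalizing f with
  | nil => rfl
  | cons a _ ih => simp [ih hf]
  | swap a b L => simp [pd_comm (pdComp_contDiff hf)]
  | trans _ _ ih₁ ih₂ => rw [ih₁ hf, ih₂ hf]

theorem pdComp_zero {L : List (Fin n)} : pdComp L (fun _ : E => (0 : F)) = fun _ => 0 := by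
  induction L with
  | nil => rfl
  | cons a L ih => simp only [pdComp_cons, ih, pd_zero]

theorem pdComp_add {L : List (Fin n)} {f g : E → F} (hf : ContDiff ℝ (⊤ : ℕ∞) f)
    (hg : ContDiff ℝ (⊤ : ℕ∞) g) :
    pdComp L (fun x => f x + g x) = fun x => pdComp L f x + pdComp L g x := by
  induction L with
  | nil => rfl
  | cons a L ih =>
    simp only [pdComp_cons, ih]
    exact pd_add ((pdComp_contDiff hf).differentiable (by simp))
      ((pdComp_contDiff hg).differentiable (by simp))

theorem pdComp_smul {𝕜' : Type*} [NontriviallyNormedField 𝕜'] [NormedSpace 𝕜' F]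
    [SMulCommClass ℝ 𝕜' F] {L : List (Fin n)} {f : E → F} (c : 𝕜') (hf : ContDiff ℝ (⊤ : ℕ∞) f) :
    pdComp L (fun x => c • f x) = fun x => c • pdComp L f x := by
  induction L with
  | nil => rfl
  | cons a L ih =>
    simp only [pdComp_cons, ih]
    exact pd_smul c ((pdComp_contDiff hf).differentiable (by simp))

theorem pd_clm_comp {j : Fin n} {f : E → F} (g : F →L[ℝ] G) (hf : Differentiable ℝ f) :
    pd j (fun x => g (f x)) = fun x => g (pd j f x) := by
  funext x
  have h : HasFDerivAt (fun x => g (f x)) (g.comp (fderiv ℝ f x)) x :=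
    (g.hasFDerivAt (x := f x)).comp x (hf x).hasFDerivAt
  rw [pd, h.fderiv]
  simp [pd]

theorem pdComp_clm_comp {L : List (Fin n)} {f : E → F} (g : F →L[ℝ] G)
    (hf : ContDiff ℝ (⊤ : ℕ∞) f) :
    pdComp L (fun x => g (f x)) = fun x => g (pdComp L f x) := by
  induction L with
  | nil => rfl
  | cons a L ih =>
    simp only [pdComp_cons, ih]
    exact pd_clm_comp g ((pdComp_contDiff hf).differentiable (by simp))

noncomputable def mList (α : Fin n →₀ ℕ) : List (Fin n) := α.toMultiset.toList

theorem mList_coe (α : Fin n →₀ ℕ) : (mList α : Multiset (Fin n)) = α.toMultiset :=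
  Multiset.coe_toList _

theorem mList_add_perm (α β : Fin n →₀ ℕ) : (mList (α + β)).Perm (mList α ++ mList β) := by
  rw [← Multiset.coe_eq_coe]
  rw [← Multiset.coe_add]
  rw [mList_coe, mList_coe, mList_coe, Finsupp.toMultiset_add]

theorem mList_single_perm (l : Fin n) (K : ℕ) :
    (mList (Finsupp.single l K)).Perm (List.replicate K l) := by
  rw [← Multiset.coe_eq_coe, mList_coe, Multiset.coe_replicate,
    Finsupp.toMultiset_single, Multiset.nsmul_singleton]

theorem mList_zero : mList (0 : Fin n →₀ ℕ) = [] := by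
  simp [mList]


theorem pdComp_replicate_zero {l : Fin n} {K c : ℕ} {f : E → F} (hK : K ≤ c)
    (h0 : pdComp (List.replicate K l) f = fun _ => 0) :
    pdComp (List.replicate c l) f = fun _ => 0 := by
  have : c = (c - K) + K := (Nat.sub_add_cancel hK).symm
  rw [this, List.replicate_add, pdComp_append, h0, pdComp_zero]

theorem pdComp_eq_zero_of_count {L : List (Fin n)} {l : Fin n} {K : ℕ} {f : E → F}
    (hf : ContDiff ℝ (⊤ : ℕ∞) f) (h0 : pdComp (List.replicate K l) f = fun _ => 0)
    (hc : K ≤ L.count l) : pdComp L f = fun _ => 0 := by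
  have hperm : ((L.filter fun x => ¬ (x = l)) ++ L.filter (· = l)).Perm L := by
    have h := List.filter_append_perm (fun x => decide ¬ (x = l)) L
    convert h using 3 <;> simp
  rw [pdComp_perm hperm.symm hf, pdComp_append, List.filter_eq (l := L) l,
    pdComp_replicate_zero hc h0, pdComp_zero]

/-! ### Constant-coefficient differential operators from polynomials -/

noncomputable def DOp (p : MvPolynomial (Fin n) ℂ) (f : E → ℂ) : E → ℂ :=
  fun x => ∑ α ∈ p.support, p.coeff α • pdComp (mList α) f x

theorem DOp_superset (p : MvPolynomial (Fin n) ℂ) (f : E → ℂ) {s : Finset (Fin n →₀ ℕ)}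
    (hs : p.support ⊆ s) :
    DOp p f = fun x => ∑ α ∈ s, p.coeff α • pdComp (mList α) f x := by
  funext x
  rw [DOp]
  exact Finset.sum_subset hs fun α _ hα => by
    rw [MvPolynomial.notMem_support_iff.mp hα, zero_smul]

theorem DOp_add (p q : MvPolynomial (Fin n) ℂ) (f : E → ℂ) :
    DOp (p + q) f = fun x => DOp p f x + DOp q f x := by
  classical
  have h1 : (p + q).support ⊆ p.support ∪ q.support := MvPolynomial.support_add
  rw [DOp_superset (p + q) f h1, DOp_superset p f Finset.subset_union_left,
    DOp_superset q f Finset.subset_union_right]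
  funext x
  rw [← Finset.sum_add_distrib]
  exact Finset.sum_congr rfl fun α _ => by rw [MvPolynomial.coeff_add, add_smul]

theorem DOp_monomial (α : Fin n →₀ ℕ) (c : ℂ) (f : E → ℂ) :
    DOp (MvPolynomial.monomial α c) f = fun x => c • pdComp (mList α) f x := by
  classical
  rcases eq_or_ne c 0 with rfl | hc
  · funext x
    simp [DOp]
  · funext x
    rw [DOp, MvPolynomial.support_monomial, if_neg hc, Finset.sum_singleton,
      MvPolynomial.coeff_monomial, if_pos rfl]

theorem DOp_contDiff {p : MvPolynomial (Fin n) ℂ} {f : E → ℂ} (hf : ContDiff ℝ (⊤ : ℕ∞) f) :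
    ContDiff ℝ (⊤ : ℕ∞) (DOp p f) := by
  apply ContDiff.sum
  intro α _
  exact (pdComp_contDiff hf).const_smul _

theorem DOp_zero_fun (p : MvPolynomial (Fin n) ℂ) :
    DOp p (fun _ => (0 : ℂ)) = fun _ => 0 := by
  funext x
  rw [DOp]
  apply Finset.sum_eq_zero
  intro α _
  rw [pdComp_zero]
  simp

theorem DOp_add_fun (p : MvPolynomial (Fin n) ℂ) {f g : E → ℂ} (hf : ContDiff ℝ (⊤ : ℕ∞) f)
    (hg : ContDiff ℝ (⊤ : ℕ∞) g) :
    DOp p (fun x => f x + g x) = fun x => DOp p f x + DOp p g x := by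
  funext x
  rw [DOp, DOp, DOp, ← Finset.sum_add_distrib]
  apply Finset.sum_congr rfl
  intro α _
  rw [pdComp_add hf hg, smul_add]

theorem DOp_sum_fun {ι : Type*} (p : MvPolynomial (Fin n) ℂ) (s : Finset ι) (g : ι → E → ℂ)
    (hg : ∀ i ∈ s, ContDiff ℝ (⊤ : ℕ∞) (g i)) :
    DOp p (fun x => ∑ i ∈ s, g i x) = fun x => ∑ i ∈ s, DOp p (g i) x := by
  classical
  induction s using Finset.induction_on with
  | empty => simpa using DOp_zero_fun p
  | @insert a s hni ih =>
    simp only [Finset.sum_insert hni]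
    rw [DOp_add_fun p (hg a (Finset.mem_insert_self a s))
        (ContDiff.sum fun i hi => hg i (Finset.mem_insert_of_mem hi)),
      ih fun i hi => hg i (Finset.mem_insert_of_mem hi)]

theorem DOp_mul (p q : MvPolynomial (Fin n) ℂ) {f : E → ℂ} (hf : ContDiff ℝ (⊤ : ℕ∞) f) :
    DOp (p * q) f = DOp p (DOp q f) := by
  induction p using MvPolynomial.induction_on' generalizing q with
  | add p₁ p₂ ih₁ ih₂ =>
    rw [add_mul, DOp_add, DOp_add, ih₁ q, ih₂ q]
  | monomial α c =>
    induction q using MvPolynomial.induction_on' with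
    | add q₁ q₂ ih₁ ih₂ =>
      rw [mul_add, DOp_add, DOp_add _ _ f, ih₁, ih₂,
        DOp_add_fun _ (DOp_contDiff hf) (DOp_contDiff hf)]
    | monomial β d =>
      have hg : ContDiff ℝ (⊤ : ℕ∞) (pdComp (mList β) f) := pdComp_contDiff hf
      rw [MvPolynomial.monomial_mul, DOp_monomial, DOp_monomial, DOp_monomial,
        pdComp_smul (L := mList α) d hg]
      funext x
      rw [pdComp_perm (mList_add_perm α β) hf, pdComp_append]
      simp [smul_smul, mul_assoc]

theorem DOp_C (c : ℂ) (f : E → ℂ) : DOp (MvPolynomial.C c) f = fun x => c • f x := by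
  rw [MvPolynomial.C_apply, DOp_monomial, mList_zero]
  rfl

theorem DOp_X {j : Fin n} {f : E → ℂ} (hf : ContDiff ℝ (⊤ : ℕ∞) f) :
    DOp (MvPolynomial.X j) f = pd j f := by
  rw [← pow_one (MvPolynomial.X j : MvPolynomial (Fin n) ℂ), MvPolynomial.X_pow_eq_monomial,
    DOp_monomial]
  funext x
  rw [pdComp_perm (mList_single_perm j 1) hf, List.replicate_one]
  simp

theorem DOp_X_pow {l : Fin n} {K : ℕ} {f : E → ℂ} (hf : ContDiff ℝ (⊤ : ℕ∞) f) :
    DOp (MvPolynomial.X l ^ K) f = pdComp (List.replicate K l) f := by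
  rw [MvPolynomial.X_pow_eq_monomial, DOp_monomial]
  funext x
  rw [pdComp_perm (mList_single_perm l K) hf]
  simp

/-! ### Iterated derivatives and `pdComp` -/

theorem iteratedFDeriv_pdComp {f : E → F} (hf : ContDiff ℝ (⊤ : ℕ∞) f) (M : ℕ) (v : Fin M → Fin n)
    (x : E) :
    iteratedFDeriv ℝ M f x (fun i => EuclideanSpace.single (v i) 1) = pdComp (List.ofFn v) f x := by
  induction M generalizing x with
  | zero => simp [iteratedFDeriv_zero_apply]
  | succ M ih =>
    have hitf : ContDiff ℝ (⊤ : ℕ∞) (iteratedFDeriv ℝ M f) := hf.iteratedFDeriv_right (by exact_mod_cast (le_top : (⊤ : ℕ∞) + M ≤ ⊤))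
    have hdif : Differentiable ℝ (iteratedFDeriv ℝ M f) := hitf.differentiable (by simp)
    have hG : pdComp (List.ofFn fun i => v i.succ) f =
        fun y => iteratedFDeriv ℝ M f y fun i => EuclideanSpace.single (v i.succ) 1 := by
      funext y; rw [ih]
    rw [List.ofFn_succ, pdComp_cons, hG]
    show _ = fderiv ℝ (fun y => iteratedFDeriv ℝ M f y fun i => EuclideanSpace.single (v i.succ) 1)
      x (EuclideanSpace.single (v 0) 1)
    rw [fderiv_continuousMultilinear_apply_const_apply (hdif x), iteratedFDeriv_succ_apply_left]
    rfl

theorem cmm_zero_of_basis {M : ℕ}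
    (Φ : ContinuousMultilinearMap ℝ (fun _ : Fin M => E) F)
    (h : ∀ w : Fin M → Fin n, Φ (fun i => EuclideanSpace.single (w i) 1) = 0) : Φ = 0 := by
  apply ContinuousMultilinearMap.toMultilinearMap_injective
  apply Module.Basis.ext_multilinear (fun _ => (EuclideanSpace.basisFun (Fin n) ℝ).toBasis)
  intro v
  simpa [OrthonormalBasis.coe_toBasis, EuclideanSpace.basisFun_apply] using h v

theorem itf_eq_zero_of_pdComp {f : E → F} {M : ℕ}
    (hL : ∀ v : Fin M → Fin n, pdComp (List.ofFn v) f = fun _ => 0)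
    (hf : ContDiff ℝ (⊤ : ℕ∞) f) (x : E) : iteratedFDeriv ℝ M f x = 0 := by
  apply cmm_zero_of_basis
  intro v
  rw [iteratedFDeriv_pdComp hf M v x, hL v]

/-! ### Functions with vanishing iterated derivatives -/

theorem eq_zero_of_itf {M : ℕ} {F : Type*} [NormedAddCommGroup F] [NormedSpace ℝ F] {f : E → F}
    (hf : ContDiff ℝ (⊤ : ℕ∞) f) (hM : ∀ x, iteratedFDeriv ℝ M f x = 0)
    (h0 : ∀ p < M, iteratedFDeriv ℝ p f 0 = 0) : ∀ x, f x = 0 := by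
  induction M generalizing F with
  | zero =>
    intro x
    have := congrArg (fun (Φ : ContinuousMultilinearMap ℝ (fun _ : Fin 0 => E) F) => Φ 0) (hM x)
    simpa [iteratedFDeriv_zero_apply] using this
  | succ M ih =>
    have hg : ContDiff ℝ (⊤ : ℕ∞) (fderiv ℝ f) := hf.fderiv_right (by simp)
    have hMg : ∀ x, iteratedFDeriv ℝ M (fderiv ℝ f) x = 0 := by
      intro x
      ext m v
      have h := congrArg (fun (Φ : ContinuousMultilinearMap ℝ (fun _ : Fin (M+1) => E) F) =>
        Φ (Fin.snoc m v)) (hM x)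
      simp only [iteratedFDeriv_succ_apply_right, Fin.init_snoc, Fin.snoc_last,
        ContinuousMultilinearMap.zero_apply] at h
      simpa using h
    have h0g : ∀ p < M, iteratedFDeriv ℝ p (fderiv ℝ f) 0 = 0 := by
      intro p hp
      ext m v
      have h := congrArg (fun (Φ : ContinuousMultilinearMap ℝ (fun _ : Fin (p+1) => E) F) =>
        Φ (Fin.snoc m v)) (h0 (p+1) (Nat.succ_lt_succ hp))
      simp only [iteratedFDeriv_succ_apply_right, Fin.init_snoc, Fin.snoc_last,
        ContinuousMultilinearMap.zero_apply] at h
      simpa using h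
    have hconst := ih hg hMg h0g
    intro x
    have hfx : f x = f 0 := by
      apply is_const_of_fderiv_eq_zero (hf.differentiable (by simp)) hconst
    have hf0 : f 0 = 0 := by
      have := congrArg (fun (Φ : ContinuousMultilinearMap ℝ (fun _ : Fin 0 => E) F) => Φ 0)
        (h0 0 (Nat.succ_pos M))
      simpa [iteratedFDeriv_zero_apply] using this
    rw [hfx, hf0]

theorem DOp_zero_poly (f : E → ℂ) : DOp (0 : MvPolynomial (Fin n) ℂ) f = fun _ => 0 := by
  funext x
  simp [DOp]

theorem DOp_sum_poly {ι : Type*} (s : Finset ι) (p : ι → MvPolynomial (Fin n) ℂ) (f : E → ℂ) :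
    DOp (∑ j ∈ s, p j) f = fun x => ∑ j ∈ s, DOp (p j) f x := by
  classical
  induction s using Finset.induction_on with
  | empty => simpa using DOp_zero_poly f
  | @insert a s hni ih =>
    simp only [Finset.sum_insert hni]
    rw [DOp_add, ih]

theorem length_eq_sum_count (L : List (Fin n)) : L.length = ∑ l, L.count l := by
  classical
  induction L with
  | nil => simp
  | cons a L ih =>
    simp only [List.length_cons, List.count_cons, ih]
    rw [Finset.sum_add_distrib]
    congr 1
    rw [Finset.sum_congr rfl fun l _ => by
      show (if a == l then 1 else 0) = if a = l then 1 else 0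
      simp [beq_iff_eq]]
    simp [Finset.sum_ite_eq]

end CEllAux


namespace CEllAuxA

open MvPolynomial

variable {n m N : ℕ}

local notation "R" => MvPolynomial (Fin n) ℂ

/-- The ideal of polynomials `p` such that `p · e_k` is a polynomial row-combination of
the rows of `B`. -/
noncomputable def rowIdeal (B : Matrix (Fin N) (Fin m) (MvPolynomial (Fin n) ℂ)) (k : Fin m) :
    Ideal (MvPolynomial (Fin n) ℂ) :=
  Submodule.comap (LinearMap.single (MvPolynomial (Fin n) ℂ) (fun _ : Fin m => MvPolynomial (Fin n) ℂ) k)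
    (LinearMap.range B.vecMulLinear)

theorem mem_rowIdeal_iff {B : Matrix (Fin N) (Fin m) (MvPolynomial (Fin n) ℂ)} {k : Fin m}
    {p : MvPolynomial (Fin n) ℂ} :
    p ∈ rowIdeal B k ↔ ∃ c : Fin N → MvPolynomial (Fin n) ℂ,
      Matrix.vecMul c B = Pi.single k p := by
  simp [rowIdeal, LinearMap.mem_range, LinearMap.single_apply, Matrix.vecMulLinear_apply]

theorem rowspan_top {Bev : Matrix (Fin N) (Fin m) ℂ} (hinj : Function.Injective Bev.mulVec) :
    Submodule.span ℂ (Set.range fun i => Bev i) = ⊤ := by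
  by_contra hne
  obtain ⟨φ, hφ0, hφ⟩ := Submodule.exists_dual_map_eq_bot_of_lt_top
    (lt_top_iff_ne_top.mpr hne) inferInstance
  set η : Fin m → ℂ := fun k => φ (Pi.single k 1) with hη
  have hφw : ∀ w : Fin m → ℂ, φ w = ∑ k, w k * η k := by
    intro w
    have hw : w = ∑ k, w k • (Pi.single k (1 : ℂ) : Fin m → ℂ) := by
      funext j
      simp [Pi.single_apply]
    conv_lhs => rw [hw]
    rw [map_sum]
    refine Finset.sum_congr rfl fun k _ => ?_
    rw [map_smul, smul_eq_mul]
  have hηne : η ≠ 0 := by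
    intro h0
    apply hφ0
    apply LinearMap.ext
    intro w
    rw [hφw w, h0]
    simp
  have hmv : Bev.mulVec η = 0 := by
    funext i
    have hmem : Bev i ∈ Submodule.span ℂ (Set.range fun i => Bev i) :=
      Submodule.subset_span ⟨i, rfl⟩
    have hz : φ (Bev i) = 0 := by
      have := hφ.le (Submodule.mem_map_of_mem hmem)
      simpa using this
    show Bev.mulVec η i = 0
    rw [← hz, hφw]
    simp [Matrix.mulVec, dotProduct]
  have : η = 0 := hinj (by rw [hmv, Matrix.mulVec_zero])
  exact hηne this

theorem exists_invertible_submatrix {Bev : Matrix (Fin N) (Fin m) ℂ}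
    (hinj : Function.Injective Bev.mulVec) :
    ∃ S : Fin m → Fin N, Function.Injective S ∧ (Bev.submatrix S id).det ≠ 0 := by
  classical
  obtain ⟨b, hbsub, hbspan, hbind⟩ := exists_linearIndependent ℂ (Set.range fun i => Bev i)
  rw [rowspan_top hinj] at hbspan
  have hbfin : b.Finite := (Set.finite_range _).subset hbsub
  letI := hbfin.fintype
  have basis : Module.Basis b ℂ (Fin m → ℂ) := Module.Basis.mk hbind (by rw [Subtype.range_coe, hbspan])
  have hcard : Fintype.card b = m := by
    have h1 := Module.finrank_eq_card_basis basis
    simpa using h1.symm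
  have eqv : Fin m ≃ b := (Fintype.equivFinOfCardEq hcard).symm
  have hchoice : ∀ x : b, ∃ i : Fin N, Bev i = (x : Fin m → ℂ) := fun x => hbsub x.2
  choose g hg using hchoice
  have hginj : Function.Injective g := by
    intro x y hxy
    apply Subtype.ext
    rw [← hg x, ← hg y, hxy]
  refine ⟨fun s => g (eqv s), hginj.comp eqv.injective, ?_⟩
  have hrows : LinearIndependent ℂ (fun s : Fin m => (Bev.submatrix (fun s => g (eqv s)) id) s) := by
    have h1 : (fun s : Fin m => (Bev.submatrix (fun s => g (eqv s)) id) s) =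
        fun s => ((eqv s : b) : Fin m → ℂ) := by
      funext s
      have : (Bev.submatrix (fun s => g (eqv s)) id) s = Bev (g (eqv s)) := by
        funext k; simp [Matrix.submatrix_apply]
      rw [this, hg]
    rw [h1]
    exact hbind.comp eqv eqv.injective
  have hunit : IsUnit (Bev.submatrix (fun s => g (eqv s)) id) :=
    Matrix.linearIndependent_rows_iff_isUnit.mp hrows
  exact (Matrix.isUnit_iff_isUnit_det _).mp hunit |>.ne_zero

theorem det_submatrix_mem_rowIdeal (B : Matrix (Fin N) (Fin m) (MvPolynomial (Fin n) ℂ))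
    (k : Fin m) (S : Fin m → Fin N) (hS : Function.Injective S) :
    (B.submatrix S id).det ∈ rowIdeal B k := by
  classical
  rw [mem_rowIdeal_iff]
  set P := B.submatrix S id with hP
  refine ⟨fun i => ∑ s, if i = S s then P.adjugate k s else 0, ?_⟩
  funext k'
  have hlhs : B.vecMul (fun i => ∑ s, if i = S s then P.adjugate k s else 0) k' =
      ∑ i, (∑ s, if i = S s then P.adjugate k s else 0) * B i k' := by
    simp [Matrix.vecMul, dotProduct]
  rw [hlhs]
  have : ∑ i, (∑ s, if i = S s then P.adjugate k s else 0) * B i k'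
      = ∑ s, P.adjugate k s * P s k' := by
    simp only [Finset.sum_mul, ite_mul, zero_mul]
    rw [Finset.sum_comm]
    refine Finset.sum_congr rfl fun s _ => ?_
    rw [Finset.sum_ite_eq' Finset.univ (S s) (fun i => P.adjugate k s * B i k')]
    simp [hP, Matrix.submatrix_apply]
  rw [this]
  have hadj : ∑ s, P.adjugate k s * P s k' = (P.adjugate * P) k k' := by
    simp [Matrix.mul_apply]
  rw [hadj, Matrix.adjugate_mul]
  simp [Matrix.smul_apply, Matrix.one_apply, Pi.single_apply, eq_comm]

theorem exists_pow_mem (B : Matrix (Fin N) (Fin m) (MvPolynomial (Fin n) ℂ))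
    (hinj : ∀ ξ : Fin n → ℂ, ξ ≠ 0 → Function.Injective (B.map (eval ξ)).mulVec) :
    ∃ K : ℕ, 0 < K ∧ ∀ (l : Fin n) (k : Fin m), X l ^ K ∈ rowIdeal B k := by
  classical
  have hzl : ∀ k : Fin m, zeroLocus ℂ (rowIdeal B k) ⊆ {0} := by
    intro k ξ hξ
    by_contra hξ0
    have hξne : ξ ≠ 0 := fun h => hξ0 (by simp [h])
    obtain ⟨S, hSi, hdet⟩ := exists_invertible_submatrix (hinj ξ hξne)
    have hmem := det_submatrix_mem_rowIdeal B k S hSi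
    have heval : eval ξ ((B.submatrix S id).det) = 0 :=
      (mem_zeroLocus_iff.mp hξ) _ hmem
    rw [RingHom.map_det] at heval
    rw [Matrix.submatrix_map] at hdet
    exact hdet heval
  have hrad : ∀ (l : Fin n) (k : Fin m), ∃ K : ℕ, X l ^ K ∈ rowIdeal B k := by
    intro l k
    have h1 : (X l : MvPolynomial (Fin n) ℂ) ∈ vanishingIdeal ℂ (zeroLocus ℂ (rowIdeal B k)) := by
      rw [mem_vanishingIdeal_iff]
      intro x hx
      have : x = 0 := hzl k hx
      simp [this]
    rw [vanishingIdeal_zeroLocus_eq_radical] at h1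
    exact Ideal.mem_radical_iff.mp h1
  choose Kf hKf using hrad
  refine ⟨1 + ∑ l, ∑ k, Kf l k, Nat.lt_of_lt_of_le Nat.one_pos (Nat.le_add_right 1 _), fun l k => ?_⟩
  have hle : Kf l k ≤ 1 + ∑ l, ∑ k, Kf l k := by
    calc Kf l k ≤ ∑ k, Kf l k := Finset.single_le_sum (fun _ _ => Nat.zero_le _) (Finset.mem_univ k)
    _ ≤ ∑ l, ∑ k, Kf l k := Finset.single_le_sum (f := fun l => ∑ k, Kf l k) (fun _ _ => Nat.zero_le _) (Finset.mem_univ l)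
    _ ≤ 1 + ∑ l, ∑ k, Kf l k := Nat.le_add_left _ _
  have : (X l : MvPolynomial (Fin n) ℂ) ^ (1 + ∑ l, ∑ k, Kf l k)
      = X l ^ ((1 + ∑ l, ∑ k, Kf l k) - Kf l k) * X l ^ (Kf l k) := by
    rw [← pow_add, Nat.sub_add_cancel hle]
  rw [this]
  exact Ideal.mul_mem_left _ _ (hKf l k)

theorem exists_pow_combination (B : Matrix (Fin N) (Fin m) (MvPolynomial (Fin n) ℂ))
    (hinj : ∀ ξ : Fin n → ℂ, ξ ≠ 0 → Function.Injective (B.map (eval ξ)).mulVec) :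
    ∃ K : ℕ, 0 < K ∧ ∀ (l : Fin n) (k : Fin m), ∃ c : Fin N → MvPolynomial (Fin n) ℂ,
      ∀ k', (∑ i, c i * B i k') = if k' = k then X l ^ K else 0 := by
  obtain ⟨K, hK, hmem⟩ := exists_pow_mem B hinj
  refine ⟨K, hK, fun l k => ?_⟩
  obtain ⟨c, hc⟩ := mem_rowIdeal_iff.mp (hmem l k)
  refine ⟨c, fun k' => ?_⟩
  have h1 : Matrix.vecMul c B k' = ∑ i, c i * B i k' := by
    simp [Matrix.vecMul, dotProduct]
  rw [← h1, hc, Pi.single_apply]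

end CEllAuxA

open CEllAux CEllAuxA in
/-- **Finite-dimensionality of the kernel of a ℂ-elliptic operator.** If the
first-order operator `𝒜u(x) = ∑ j, A j (∂_j u x)` is ℂ-elliptic (its complexified symbol is
injective for every nonzero `ξ ∈ ℂ^n`), then the space of smooth `v : ℝ^n → ℝ^m` with
`𝒜v ≡ 0` (here: any submodule of the function space with exactly this carrier) is a
finite-dimensional real vector space. -/
theorem kernel_finiteDimensional_of_CElliptic (n m N : ℕ) (hn : 1 ≤ n) (hm : 1 ≤ m) (hN : 1 ≤ N)
    (A : Fin n → (EuclideanSpace ℝ (Fin m) →L[ℝ] EuclideanSpace ℝ (Fin N)))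
    (hC : ∀ ξ : Fin n → ℂ, ξ ≠ 0 →
      Function.Injective fun (η : Fin m → ℂ) (i : Fin N) =>
        ∑ j, ξ j * ∑ k, η k * ((A j (EuclideanSpace.single k (1 : ℝ))) i : ℂ))
    (V : Submodule ℝ (EuclideanSpace ℝ (Fin n) → EuclideanSpace ℝ (Fin m)))
    (hV : ∀ v : EuclideanSpace ℝ (Fin n) → EuclideanSpace ℝ (Fin m),
      v ∈ V ↔ ContDiff ℝ (⊤ : ℕ∞) v ∧
        ∀ x, ∑ j, A j (fderiv ℝ v x (EuclideanSpace.single j (1 : ℝ))) = 0) :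
    FiniteDimensional ℝ V := by
  classical
  set a : Fin N → Fin n → Fin m → ℝ :=
    fun i j k => (A j (EuclideanSpace.single k (1 : ℝ))) i with ha
  set B : Matrix (Fin N) (Fin m) (MvPolynomial (Fin n) ℂ) :=
    fun i k => ∑ j, MvPolynomial.C ((a i j k : ℝ) : ℂ) * MvPolynomial.X j with hB
  -- the evaluated symbol matrix agrees with the map in `hC`
  have hinj : ∀ ξ : Fin n → ℂ, ξ ≠ 0 →
      Function.Injective (B.map (MvPolynomial.eval ξ)).mulVec := by
    intro ξ hξ
    have hBev : (B.map (MvPolynomial.eval ξ)).mulVec =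
        fun (η : Fin m → ℂ) (i : Fin N) => ∑ j, ξ j * ∑ k, η k * (a i j k : ℂ) := by
      funext η i
      have h1 : ∀ k, MvPolynomial.eval ξ (B i k) = ∑ j, (a i j k : ℂ) * ξ j := by
        intro k
        simp [hB]
      calc (B.map (MvPolynomial.eval ξ)).mulVec η i
          = ∑ k, (∑ j, (a i j k : ℂ) * ξ j) * η k := by
            simp [Matrix.mulVec, dotProduct, Matrix.map_apply, h1]
        _ = ∑ k, ∑ j, ξ j * (η k * (a i j k : ℂ)) := by
            refine Finset.sum_congr rfl fun k _ => ?_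
            rw [Finset.sum_mul]
            refine Finset.sum_congr rfl fun j _ => by ring
        _ = ∑ j, ξ j * ∑ k, η k * (a i j k : ℂ) := by
            rw [Finset.sum_comm]
            refine Finset.sum_congr rfl fun j _ => ?_
            rw [Finset.mul_sum]
    rw [hBev]
    exact hC ξ hξ
  obtain ⟨K, hKpos, hcomb⟩ := exists_pow_combination B hinj
  set M := n * (K - 1) + 1 with hMdef
  -- smoothness of elements of V
  have hsm : ∀ v : V, ContDiff ℝ (⊤ : ℕ∞) (v : EuclideanSpace ℝ (Fin n) → EuclideanSpace ℝ (Fin m)) :=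
    fun v => ((hV _).mp v.2).1
  -- the linear "jet at 0" map
  let Φ : V →ₗ[ℝ] (Π p : Fin M, (Fin (p : ℕ) → Fin n) → EuclideanSpace ℝ (Fin m)) := {
    toFun := fun v => fun p w =>
      iteratedFDeriv ℝ (p : ℕ) (v : EuclideanSpace ℝ (Fin n) → EuclideanSpace ℝ (Fin m)) 0
        (fun i => EuclideanSpace.single (w i) 1)
    map_add' := by
      intro v w
      funext p wi
      have h := iteratedFDeriv_add_apply (i := (p : ℕ))
        ((hsm v).of_le (by exact_mod_cast le_top)).contDiffAt ((hsm w).of_le (by exact_mod_cast le_top)).contDiffAt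
        (x := (0 : EuclideanSpace ℝ (Fin n)))
      simp only [Pi.add_apply]
      have hco : ((v + w : V) : EuclideanSpace ℝ (Fin n) → EuclideanSpace ℝ (Fin m))
          = (v : _) + (w : _) := rfl
      rw [hco, h]
      rfl
    map_smul' := by
      intro c v
      funext p wi
      have h := iteratedFDeriv_const_smul_apply (i := (p : ℕ))
        ((hsm v).of_le (by exact_mod_cast le_top)).contDiffAt (a := c) (x := (0 : EuclideanSpace ℝ (Fin n)))
      have hco : ((c • v : V) : EuclideanSpace ℝ (Fin n) → EuclideanSpace ℝ (Fin m))
          = c • (v : _) := rfl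
      simp only [RingHom.id_apply, Pi.smul_apply]
      rw [hco, h]
      rfl }
  -- injectivity of Φ
  have hker : ∀ v : V, Φ v = 0 → v = 0 := by
    intro v hΦv
    set vf : EuclideanSpace ℝ (Fin n) → EuclideanSpace ℝ (Fin m) := v.1 with hvf_def
    have hvf : ContDiff ℝ (⊤ : ℕ∞) vf := hsm v
    have hpde : ∀ x, ∑ j, A j (fderiv ℝ vf x (EuclideanSpace.single j (1 : ℝ))) = 0 :=
      ((hV _).mp v.2).2
    set Tk : Fin m → (EuclideanSpace ℝ (Fin m) →L[ℝ] ℂ) :=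
      fun k => Complex.ofRealCLM.comp (EuclideanSpace.proj k) with hTk
    set u : Fin m → EuclideanSpace ℝ (Fin n) → ℂ := fun k x => Tk k (vf x) with hu_def
    have hu : ∀ k, ContDiff ℝ (⊤ : ℕ∞) (u k) := fun k => ((Tk k).contDiff).comp hvf
    -- decomposition of a Euclidean vector in the standard basis
    have hdec : ∀ w : EuclideanSpace ℝ (Fin m),
        w = ∑ k, w k • EuclideanSpace.single k (1 : ℝ) := by
      intro w
      refine PiLp.ext fun j => ?_
      have : (∑ k, w k • EuclideanSpace.single k (1 : ℝ)) j
          = ∑ k, w k * (EuclideanSpace.single k (1 : ℝ)) j := by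
        rw [WithLp.ofLp_sum, Finset.sum_apply]
        rfl
      rw [this]
      simp [EuclideanSpace.single_apply, eq_comm]
    -- rows of the complexified system vanish
    have hrow : ∀ i x, ∑ k, ∑ j, (a i j k : ℂ) * pd j (u k) x = 0 := by
      intro i x
      have hpd : ∀ k j, pd j (u k) x = Tk k (pd j vf x) := by
        intro k j
        have := pd_clm_comp (j := j) (Tk k) (hvf.differentiable (by simp))
        exact congrFun this x
      have hreal : ∑ j, ∑ k, (fderiv ℝ vf x (EuclideanSpace.single j (1:ℝ))) k * a i j k = 0 := by
        have h0 := congrArg (EuclideanSpace.proj i) (hpde x)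
        rw [map_sum] at h0
        have h1 : ∀ j, EuclideanSpace.proj i (A j (fderiv ℝ vf x (EuclideanSpace.single j (1:ℝ))))
            = ∑ k, (fderiv ℝ vf x (EuclideanSpace.single j (1:ℝ))) k * a i j k := by
          intro j
          set w := fderiv ℝ vf x (EuclideanSpace.single j (1:ℝ)) with hw
          conv_lhs => rw [hdec w]
          rw [map_sum, map_sum]
          refine Finset.sum_congr rfl fun k _ => ?_
          rw [map_smul, map_smul]
          simp [ha, smul_eq_mul]
        rw [Finset.sum_congr rfl fun j _ => h1 j] at h0
        simpa using h0
      have hswap : ∑ k, ∑ j, (a i j k : ℂ) * pd j (u k) x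
          = ∑ j, ∑ k, (a i j k : ℂ) * pd j (u k) x := Finset.sum_comm
      rw [hswap]
      have hterm : ∀ j k, (a i j k : ℂ) * pd j (u k) x
          = (((fderiv ℝ vf x (EuclideanSpace.single j (1:ℝ))) k * a i j k : ℝ) : ℂ) := by
        intro j k
        rw [hpd k j]
        have : Tk k (pd j vf x) = (((pd j vf x) k : ℝ) : ℂ) := by
          simp [hTk]
        rw [this]
        push_cast
        rw [mul_comm]
        rfl
      rw [Finset.sum_congr rfl fun j _ => Finset.sum_congr rfl fun k _ => hterm j k]
      have hcast : ∑ j, ∑ k,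
            (((fderiv ℝ vf x (EuclideanSpace.single j (1:ℝ))) k * a i j k : ℝ) : ℂ)
          = ((∑ j, ∑ k, (fderiv ℝ vf x (EuclideanSpace.single j (1:ℝ))) k * a i j k : ℝ) : ℂ) := by
        push_cast
        rfl
      rw [hcast, hreal, Complex.ofReal_zero]
    -- pure powers of derivatives annihilate the components
    have hzero : ∀ (l : Fin n) (k : Fin m),
        pdComp (List.replicate K l) (u k) = fun _ => 0 := by
      intro l k
      obtain ⟨c, hc⟩ := hcomb l k
      have hrowf : ∀ i, (fun x => ∑ k', DOp (B i k') (u k') x) = fun _ => (0 : ℂ) := by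
        intro i
        funext x
        have hBik : ∀ k', DOp (B i k') (u k') = fun x => ∑ j, (a i j k' : ℂ) * pd j (u k') x := by
          intro k'
          rw [hB]
          rw [DOp_sum_poly]
          funext y
          refine Finset.sum_congr rfl fun j _ => ?_
          rw [DOp_mul _ _ (hu k'), DOp_X (hu k'), DOp_C]
          simp [smul_eq_mul]
        rw [Finset.sum_congr rfl fun k' _ => congrFun (hBik k') x]
        exact hrow i x
      have step1 : pdComp (List.replicate K l) (u k) = DOp (MvPolynomial.X l ^ K) (u k) :=
        (DOp_X_pow (hu k)).symm
      have step2 : DOp (MvPolynomial.X l ^ K) (u k)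
          = fun x => ∑ k', DOp (if k' = k then MvPolynomial.X l ^ K else 0) (u k') x := by
        funext x
        rw [Finset.sum_eq_single_of_mem k (Finset.mem_univ k)
          (fun k' _ hk' => by rw [if_neg hk', DOp_zero_poly])]
        rw [if_pos rfl]
      have step3 : (fun x => ∑ k', DOp (if k' = k then MvPolynomial.X l ^ K else 0) (u k') x)
          = fun x => ∑ k', DOp (∑ i, c i * B i k') (u k') x := by
        funext x
        exact Finset.sum_congr rfl fun k' _ => by rw [hc k']
      have step4 : (fun x => ∑ k', DOp (∑ i, c i * B i k') (u k') x)
          = fun x => ∑ k', ∑ i, DOp (c i) (DOp (B i k') (u k')) x := by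
        funext x
        refine Finset.sum_congr rfl fun k' _ => ?_
        rw [DOp_sum_poly]
        exact Finset.sum_congr rfl fun i _ => by rw [DOp_mul _ _ (hu k')]
      have step5 : (fun x => ∑ k', ∑ i, DOp (c i) (DOp (B i k') (u k')) x)
          = fun _ => (0 : ℂ) := by
        funext x
        rw [Finset.sum_comm]
        have : ∀ i, ∑ k', DOp (c i) (DOp (B i k') (u k')) x = 0 := by
          intro i
          have hsf := DOp_sum_fun (c i) Finset.univ (fun k' => DOp (B i k') (u k'))
            (fun k' _ => DOp_contDiff (hu k'))
          have := (congrFun hsf x).symm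
          rw [this]
          have hz := hrowf i
          rw [hz, DOp_zero_fun]
        rw [Finset.sum_congr rfl fun i _ => this i]
        simp
      rw [step1, step2, step3, step4, step5]
    -- all derivatives of order M of the components vanish
    have hlist : ∀ (k : Fin m) (w : Fin M → Fin n),
        pdComp (List.ofFn w) (u k) = fun _ => 0 := by
      intro k w
      have hex : ∃ l, K ≤ (List.ofFn w).count l := by
        by_contra hno
        push_neg at hno
        have hlen : (List.ofFn w).length = M := List.length_ofFn
        have hsum := length_eq_sum_count (List.ofFn w)
        have hb : ∑ l, (List.ofFn w).count l ≤ ∑ _l : Fin n, (K - 1) :=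
          Finset.sum_le_sum fun l _ => Nat.le_sub_one_of_lt (hno l)
        rw [Finset.sum_const, Finset.card_univ, Fintype.card_fin, smul_eq_mul] at hb
        omega
      obtain ⟨l, hl⟩ := hex
      exact pdComp_eq_zero_of_count (hu k) (hzero l k) hl
    -- hence all derivatives of order M of v vanish
    have hv0 : ∀ w : Fin M → Fin n, pdComp (List.ofFn w) vf = fun _ => 0 := by
      intro w
      funext x
      have hk : ∀ k, (pdComp (List.ofFn w) vf x) k = 0 := by
        intro k
        have hcc := pdComp_clm_comp (L := List.ofFn w) (Tk k) hvf
        have h1 : pdComp (List.ofFn w) (u k) x = Tk k (pdComp (List.ofFn w) vf x) :=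
          congrFun hcc x
        rw [hlist k w] at h1
        have h2 : Tk k (pdComp (List.ofFn w) vf x) = 0 := by simpa using h1.symm
        have h3 : ((((pdComp (List.ofFn w) vf x) k : ℝ)) : ℂ) = 0 := by
          simpa [hTk] using h2
        exact_mod_cast h3
      refine PiLp.ext fun k => ?_
      exact hk k
    have hM0 : ∀ x, iteratedFDeriv ℝ M vf x = 0 := itf_eq_zero_of_pdComp hv0 hvf
    have h00 : ∀ p, p < M → iteratedFDeriv ℝ p vf 0 = 0 := by
      intro p hp
      apply cmm_zero_of_basis
      intro w
      have := congrFun (congrFun hΦv ⟨p, hp⟩) w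
      exact this
    have hvz : ∀ x, vf x = 0 := eq_zero_of_itf hvf hM0 h00
    apply Subtype.ext
    funext x
    exact hvz x
  have hinjΦ : Function.Injective Φ := by
    rw [← LinearMap.ker_eq_bot]
    rw [Submodule.eq_bot_iff]
    intro v hv
    exact hker v hv
  exact FiniteDimensional.of_injective Φ hinjΦ
end
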